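/- arXiv:2501.15301 — 2 statements merged into one kernel-verified Lean document; each statement's English description precedes it below -/
import Mathlib

section
/- If s : 𝒳 → 𝒮 and t : 𝒴 → 𝒯 are both sufficient, then the mutual information is preserved: I_p(X;Y) = I_{pST}(S;T), i.e. ∑_{(x,y) : p(x,y)>0} p(x,y)·log(p(x,y)/(pX(x)·pY(y))) = ∑_{(s0,t0) : pST(s0,t0)>0} pST(s0,t0)·log(pST(s0,t0)/(pS(s0)·pT(t0))). -/
open Finset

noncomputable section
open scoped Classical

variable {𝒳 𝒴 𝒮 𝒯 : Type*}

/-- Marginal of a joint pmf on the first coordinate. -/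
def margX [Fintype 𝒴] (p : 𝒳 × 𝒴 → ℝ) (x : 𝒳) : ℝ := ∑ y, p (x, y)

/-- Marginal of a joint pmf on the second coordinate. -/
def margY [Fintype 𝒳] (p : 𝒳 × 𝒴 → ℝ) (y : 𝒴) : ℝ := ∑ x, p (x, y)

/-- Distribution of `S = s(X)`. -/
def margS [Fintype 𝒳] [Fintype 𝒴] (p : 𝒳 × 𝒴 → ℝ) (s : 𝒳 → 𝒮) (s0 : 𝒮) : ℝ :=
  ∑ x ∈ Finset.univ.filter (fun x => s x = s0), margX p x

/-- Distribution of `T = t(Y)`. -/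
def margT [Fintype 𝒳] [Fintype 𝒴] (p : 𝒳 × 𝒴 → ℝ) (t : 𝒴 → 𝒯) (t0 : 𝒯) : ℝ :=
  ∑ y ∈ Finset.univ.filter (fun y => t y = t0), margY p y

/-- Joint distribution of `(S, T) = (s(X), t(Y))`. -/
def margST [Fintype 𝒳] [Fintype 𝒴] (p : 𝒳 × 𝒴 → ℝ) (s : 𝒳 → 𝒮) (t : 𝒴 → 𝒯)
    (w : 𝒮 × 𝒯) : ℝ :=
  ∑ x ∈ Finset.univ.filter (fun x => s x = w.1),
    ∑ y ∈ Finset.univ.filter (fun y => t y = w.2), p (x, y)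

/-- `q` is a probability mass function. -/
def IsPMF {Z : Type*} [Fintype Z] (q : Z → ℝ) : Prop := (∀ z, 0 ≤ q z) ∧ ∑ z, q z = 1

/-- `s` is a sufficient statistic of `X` for `Y` (Markov chain `X - S - Y`). -/
def SuffS [Fintype 𝒴] (p : 𝒳 × 𝒴 → ℝ) (s : 𝒳 → 𝒮) : Prop :=
  ∀ x x' y, s x = s x' → p (x, y) * margX p x' = p (x', y) * margX p x

/-- `t` is a sufficient statistic of `Y` for `X` (Markov chain `X - T - Y`). -/
def SuffT [Fintype 𝒳] (p : 𝒳 × 𝒴 → ℝ) (t : 𝒴 → 𝒯) : Prop :=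
  ∀ x y y', t y = t y' → p (x, y) * margY p y' = p (x, y') * margY p y

/-- Mutual information of a joint pmf on `A × B`. -/
def mutInfo {A B : Type*} [Fintype A] [Fintype B] (q : A × B → ℝ) : ℝ :=
  ∑ z : A × B, if 0 < q z then
    q z * Real.log (q z / ((∑ b, q (z.1, b)) * (∑ a, q (a, z.2)))) else 0

/-- Shannon entropy of a pmf on a finite type. -/
def entropy {W : Type*} [Fintype W] (r : W → ℝ) : ℝ :=
  -∑ w, if 0 < r w then r w * Real.log (r w) else 0

/-- Wyner's common information of a joint pmf `m` on `A × B`. -/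
def wynerCI {A B : Type*} [Fintype A] [Fintype B] (m : A × B → ℝ) : ℝ :=
  sInf { c | ∃ (n : ℕ) (q : A × B × Fin n → ℝ),
    IsPMF q ∧
    (∀ a b, ∑ w, q (a, b, w) = m (a, b)) ∧
    (∀ a b w, q (a, b, w) * (∑ a', ∑ b', q (a', b', w)) =
      (∑ b', q (a, b', w)) * (∑ a', q (a', b, w))) ∧
    c = mutInfo (fun z : Fin n × (A × B) => q (z.2.1, z.2.2, z.1)) }

/-- Gács–Körner common information of a joint pmf `m` on `A × B`. -/
def gkCI {A B : Type*} [Fintype A] [Fintype B] (m : A × B → ℝ) : ℝ :=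
  sSup { c | ∃ (n : ℕ) (f : A → Fin n) (g : B → Fin n),
    (∑ z : A × B, if f z.1 ≠ g z.2 then m z else 0) = 0 ∧
    c = entropy (fun w : Fin n =>
      ∑ a ∈ Finset.univ.filter (fun a => f a = w), ∑ b, m (a, b)) }

/-- Information-bottleneck Lagrangian value. -/
def ibL {A B : Type*} [Fintype A] [Fintype B] (m : A × B → ℝ) (β : ℝ) : ℝ :=
  sInf { c | ∃ (n : ℕ) (r : A → Fin n → ℝ),
    (∀ a u, 0 ≤ r a u) ∧ (∀ a, ∑ u, r a u = 1) ∧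
    c = mutInfo (fun z : Fin n × A => r z.2 z.1 * ∑ b, m (z.2, b))
        - β * mutInfo (fun z : Fin n × B => ∑ a, r a z.1 * m (a, z.2)) }

/-- Information-bottleneck curve. -/
def ibCurve {A B : Type*} [Fintype A] [Fintype B] (m : A × B → ℝ) (R : ℝ) : ℝ :=
  sSup { c | ∃ (n : ℕ) (r : A → Fin n → ℝ),
    (∀ a u, 0 ≤ r a u) ∧ (∀ a, ∑ u, r a u = 1) ∧
    mutInfo (fun z : Fin n × A => r z.2 z.1 * ∑ b, m (z.2, b)) ≤ R ∧
    c = mutInfo (fun z : Fin n × B => ∑ a, r a z.1 * m (a, z.2)) }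

/-!
Sufficiency of `s` and of `t` together give the factorisation
`p(x,y) · pS(s x) · pT(t y) = pST(s x, t y) · pX(x) · pY(y)`,
so the information density `log (p / (pX · pY))` is constant on every fibre of `(x, y) ↦ (s x, t y)`
that carries mass, with value the information density of `pST`. Grouping the sum defining
`I(X;Y)` by these fibres therefore yields the sum defining `I(S;T)`.
-/

theorem ite_pos_mul_eq_mul {x : ℝ} (hx : 0 ≤ x) (y : ℝ) : (if 0 < x then x * y else 0) = x * y := by
  split_ifs with h
  · rfl
  · rw [le_antisymm (not_lt.1 h) hx, zero_mul]

theorem sum_ite_pos_mul_eq_of_fiberwise {α β : Type*} [Fintype α] [Fintype β] [DecidableEq β]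
    (f : α → β) {q : α → ℝ} (hq : ∀ a, 0 ≤ q a) {Q : β → ℝ} (hQ : ∀ b, Q b = ∑ a with f a = b, q a)
    {g : α → ℝ} {c : β → ℝ} (hg : ∀ a, 0 < q a → g a = c (f a)) :
    ∑ a, (if 0 < q a then q a * g a else 0) = ∑ b, if 0 < Q b then Q b * c b else 0 := by
  have hQ0 : ∀ b, 0 ≤ Q b := fun b => hQ b ▸ sum_nonneg fun a _ => hq a
  calc ∑ a, (if 0 < q a then q a * g a else 0)
      = ∑ a, q a * c (f a) := sum_congr rfl fun a _ => by
        by_cases ha : 0 < q a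
        · rw [if_pos ha, hg a ha]
        · rw [if_neg ha, le_antisymm (not_lt.1 ha) (hq a), zero_mul]
    _ = ∑ b, ∑ a with f a = b, q a * c (f a) := (sum_fiberwise _ f _).symm
    _ = ∑ b, Q b * c b := sum_congr rfl fun b _ => by
        rw [hQ, sum_mul]
        exact sum_congr rfl fun a ha => by rw [(mem_filter.1 ha).2]
    _ = ∑ b, if 0 < Q b then Q b * c b else 0 :=
        sum_congr rfl fun b _ => (ite_pos_mul_eq_mul (hQ0 b) _).symm

section Sufficiency

variable {p : 𝒳 × 𝒴 → ℝ}

theorem le_margX [Fintype 𝒴] (hp : ∀ z, 0 ≤ p z) (x : 𝒳) (y : 𝒴) : p (x, y) ≤ margX p x :=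
  single_le_sum (fun y _ => hp (x, y)) (mem_univ y)

theorem le_margY [Fintype 𝒳] (hp : ∀ z, 0 ≤ p z) (x : 𝒳) (y : 𝒴) : p (x, y) ≤ margY p y :=
  single_le_sum (fun x _ => hp (x, y)) (mem_univ x)

variable [Fintype 𝒳] [Fintype 𝒴]

theorem margX_le_margS (hp : ∀ z, 0 ≤ p z) (s : 𝒳 → 𝒮) (x : 𝒳) : margX p x ≤ margS p s (s x) :=
  single_le_sum (fun x' _ => sum_nonneg fun y _ => hp (x', y)) (by simp)

theorem margY_le_margT (hp : ∀ z, 0 ≤ p z) (t : 𝒴 → 𝒯) (y : 𝒴) : margY p y ≤ margT p t (t y) :=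
  single_le_sum (fun y' _ => sum_nonneg fun x _ => hp (x, y')) (by simp)

theorem margST_eq_sum_filter (s : 𝒳 → 𝒮) (t : 𝒴 → 𝒯) (w : 𝒮 × 𝒯) :
    margST p s t w = ∑ z : 𝒳 × 𝒴 with (s z.1, t z.2) = w, p z := by
  simp only [margST, sum_filter, Fintype.sum_prod_type, Prod.ext_iff, ite_and]
  exact sum_congr rfl fun x _ => by split_ifs <;> simp

theorem SuffS.mul_margS {s : 𝒳 → 𝒮} (hs : SuffS p s) (x : 𝒳) (y : 𝒴) :
    p (x, y) * margS p s (s x) = (∑ x' with s x' = s x, p (x', y)) * margX p x := by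
  rw [margS, mul_sum, sum_mul]
  exact sum_congr rfl fun x' hx' => hs x x' y (mem_filter.1 hx').2.symm

theorem SuffT.mul_margT {t : 𝒴 → 𝒯} (ht : SuffT p t) (x : 𝒳) (y : 𝒴) :
    p (x, y) * margT p t (t y) = (∑ y' with t y' = t y, p (x, y')) * margY p y := by
  rw [margT, mul_sum, sum_mul]
  exact sum_congr rfl fun y' hy' => ht x y y' (mem_filter.1 hy').2.symm

theorem mul_margS_mul_margT {s : 𝒳 → 𝒮} {t : 𝒴 → 𝒯} (hs : SuffS p s) (ht : SuffT p t)
    (x : 𝒳) (y : 𝒴) :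
    p (x, y) * margS p s (s x) * margT p t (t y)
      = margST p s t (s x, t y) * margX p x * margY p y := by
  rw [hs.mul_margS, mul_right_comm, sum_mul, sum_congr rfl fun x' _ => ht.mul_margT x' y,
    ← sum_mul, mul_right_comm]
  rfl

theorem div_margX_mul_margY_eq {s : 𝒳 → 𝒮} {t : 𝒴 → 𝒯} (hp : ∀ z, 0 ≤ p z)
    (hs : SuffS p s) (ht : SuffT p t) {x : 𝒳} {y : 𝒴} (hxy : 0 < p (x, y)) :
    p (x, y) / (margX p x * margY p y)
      = margST p s t (s x, t y) / (margS p s (s x) * margT p t (t y)) := by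
  have hX := hxy.trans_le (le_margX hp x y)
  have hY := hxy.trans_le (le_margY hp x y)
  have hS := hX.trans_le (margX_le_margS hp s x)
  have hT := hY.trans_le (margY_le_margT hp t y)
  rw [div_eq_div_iff (by positivity) (by positivity)]
  linear_combination mul_margS_mul_margT hs ht x y

end Sufficiency

theorem mutual_information_preserved_general
    [Fintype 𝒳] [Fintype 𝒴]
    [Fintype 𝒮] [Fintype 𝒯]
    (p : 𝒳 × 𝒴 → ℝ) (hp : IsPMF p)
    (s : 𝒳 → 𝒮) (t : 𝒴 → 𝒯)
    (hs : SuffS p s) (ht : SuffT p t) :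
    (∑ z : 𝒳 × 𝒴, if 0 < p z then
        p z * Real.log (p z / (margX p z.1 * margY p z.2)) else 0)
    = ∑ w : 𝒮 × 𝒯, if 0 < margST p s t w then
        margST p s t w
          * Real.log (margST p s t w / (margS p s w.1 * margT p t w.2)) else 0 :=
  sum_ite_pos_mul_eq_of_fiberwise (fun z => (s z.1, t z.2)) hp.1 (margST_eq_sum_filter s t)
    fun _ hz => by rw [div_margX_mul_margY_eq hp.1 hs ht hz]

/-- Mutual information is preserved under sufficient statistics. -/
theorem mutual_information_preserved
    [Fintype 𝒳] [Nonempty 𝒳] [Fintype 𝒴] [Nonempty 𝒴]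
    [Fintype 𝒮] [Nonempty 𝒮] [Fintype 𝒯] [Nonempty 𝒯]
    (p : 𝒳 × 𝒴 → ℝ) (hp : IsPMF p)
    (hX : ∀ x, 0 < margX p x) (hY : ∀ y, 0 < margY p y)
    (s : 𝒳 → 𝒮) (t : 𝒴 → 𝒯)
    (hs : SuffS p s) (ht : SuffT p t) :
    (∑ z : 𝒳 × 𝒴, if 0 < p z then
        p z * Real.log (p z / (margX p z.1 * margY p z.2)) else 0)
    = ∑ w : 𝒮 × 𝒯, if 0 < margST p s t w then
        margST p s t w
          * Real.log (margST p s t w / (margS p s w.1 * margT p t w.2)) else 0 :=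
  mutual_information_preserved_general p hp s t hs ht

end
end

section
/- Suppose s : 𝒳 → 𝒮 and t : 𝒴 → 𝒯 are both sufficient. Let 𝒲 be a nonempty finite type and q a joint pmf on 𝒳 × 𝒴 × 𝒲 whose (𝒳,𝒴)-marginal is p and which satisfies the conditional independence X⊥Y given W: q(x,y,w)·qW(w) = qXW(x,w)·qYW(y,w) for all x,y,w. Then there exists a joint pmf q' on 𝒳 × 𝒴 × 𝒲 with (𝒳,𝒴)-marginal p such that: (i) q'(x,y,w)·pST(s(x),t(y)) = p(x,y)·q'STW(s(x),t(y),w) for all x,y,w (Markov relation (X,Y)−(S,T)−W'); (ii) q'STW = qSTW, where qSTW(s0,t0,w) = ∑_{x : s(x)=s0, y : t(y)=t0} q(x,y,w); (iii) q'(x,y,w)·pS(s(x))·pT(t(y))·q'W(w) = pX(x)·pY(y)·q'SW(s(x),w)·q'TW(t(y),w) for all x,y,w (chain X−S−W'−T−Y); and (iv) I_{q'}(W;(X,Y)) = I_q(W;(S,T)) = I_q(W;(X,Y)) − I_q(W;(X,Y)|(S,T)), where I_q(W;(S,T)) is computed from the joint distribution of ((s(x),t(y)),w) under q and I_q(W;(X,Y)|(S,T))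 = ∑_{(x,y,w) : q(x,y,w)>0} q(x,y,w)·log( q(x,y,w)·pST(s(x),t(y)) / ( qSTW(s(x),t(y),w)·p(x,y) ) ). -/
/-
Given `(X, Y) = (x, y)`, draw `W'` from the conditional law `q(w | s x, t y)` of `W` given
`(S, T)`. Then `(S, T, W')` has the law of `(S, T, W)`, so `S` and `T` remain conditionally
independent given `W'`, and sufficiency of `s` and `t` upgrades this to `X - S - W' - T - Y`.
Both information identities are instances of the chain rule
`I(W; (X, Y)) = I(W; (S, T)) + I(W; (X, Y) | (S, T))`, whose last term vanishes for `W'`.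
-/

open Finset

noncomputable section
open scoped Classical

variable {𝒳 𝒴 𝒮 𝒯 : Type*}

/-- Joint distribution of `(S, T, W) = (s(X), t(Y), W)` induced by a joint pmf `q`
on `𝒳 × 𝒴 × 𝒲`. -/
def margSTW {𝒲 : Type*} [Fintype 𝒳] [Fintype 𝒴] [Fintype 𝒲]
    (q : 𝒳 × 𝒴 × 𝒲 → ℝ) (s : 𝒳 → 𝒮) (t : 𝒴 → 𝒯) (s0 : 𝒮) (t0 : 𝒯) (w : 𝒲) : ℝ :=
  ∑ x ∈ Finset.univ.filter (fun x => s x = s0),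
    ∑ y ∈ Finset.univ.filter (fun y => t y = t0), q (x, y, w)

section Pushforward

variable {A B C : Type*} [Fintype A]

def pushFst (f : A → C) (r : A × B → ℝ) (z : C × B) : ℝ :=
  ∑ a ∈ univ.filter (fun a => f a = z.1), r (a, z.2)

/-- `I(B; A | f A)` for `(A, B)` distributed according to `r`. -/
def condMutInfo [Fintype B] (f : A → C) (r : A × B → ℝ) : ℝ :=
  ∑ z : A × B, if 0 < r z then
    r z * Real.log (r z * (∑ b, pushFst f r (f z.1, b))
      / (pushFst f r (f z.1, z.2) * ∑ b, r (z.1, b))) else 0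

theorem pushFst_nonneg (f : A → C) {r : A × B → ℝ} (hr : ∀ z, 0 ≤ r z) (z : C × B) :
    0 ≤ pushFst f r z :=
  sum_nonneg fun _ _ => hr _

theorem le_pushFst (f : A → C) {r : A × B → ℝ} (hr : ∀ z, 0 ≤ r z) (a : A) (b : B) :
    r (a, b) ≤ pushFst f r (f a, b) :=
  single_le_sum (f := fun a => r (a, b)) (fun _ _ => hr _) (by simp)

theorem sum_pushFst_fst [Fintype C] (f : A → C) (r : A × B → ℝ) (b : B) :
    ∑ c, pushFst f r (c, b) = ∑ a, r (a, b) :=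
  sum_fiberwise univ f (fun a => r (a, b))

theorem sum_mul_comp_eq_sum_pushFst_mul [Fintype B] [Fintype C] (f : A → C) (r : A × B → ℝ)
    (g : C × B → ℝ) :
    ∑ z : A × B, r z * g (f z.1, z.2) = ∑ z : C × B, pushFst f r z * g z := by
  simp only [Fintype.sum_prod_type, pushFst, sum_mul]
  rw [sum_comm, sum_comm (γ := C)]
  refine sum_congr rfl fun b _ => (sum_fiberwise univ f _).symm.trans ?_
  refine sum_congr rfl fun c _ => sum_congr rfl fun a ha => ?_
  rw [(mem_filter.1 ha).2]

end Pushforward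

section MutualInformation

variable {A B C : Type*} [Fintype A] [Fintype B]

theorem mutInfo_eq_sum_mul_log {r : A × B → ℝ} (hr : ∀ z, 0 ≤ r z) :
    mutInfo r = ∑ z, r z * Real.log (r z / ((∑ b, r (z.1, b)) * ∑ a, r (a, z.2))) := by
  refine sum_congr rfl fun z _ => ?_
  rcases (hr z).lt_or_eq with h | h
  · rw [if_pos h]
  · simp [← h]

theorem mutInfo_eq_mutInfo_pushFst_add_condMutInfo [Fintype C] (f : A → C) {r : A × B → ℝ}
    (hr : ∀ z, 0 ≤ r z) :
    mutInfo r = mutInfo (pushFst f r) + condMutInfo f r := by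
  rw [mutInfo_eq_sum_mul_log (pushFst_nonneg f hr), ← sum_mul_comp_eq_sum_pushFst_mul,
    mutInfo, condMutInfo, ← sum_add_distrib]
  refine sum_congr rfl fun ⟨a, b⟩ _ => ?_
  simp only [sum_pushFst_fst]
  split_ifs with h
  · have hA : 0 < ∑ b', r (a, b') :=
      h.trans_le (single_le_sum (f := fun b' => r (a, b')) (fun _ _ => hr _) (mem_univ b))
    have hB : 0 < ∑ a', r (a', b) :=
      h.trans_le (single_le_sum (f := fun a' => r (a', b)) (fun _ _ => hr _) (mem_univ a))
    have hF : 0 < pushFst f r (f a, b) := h.trans_le (le_pushFst f hr a b)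
    have hFA : 0 < ∑ b', pushFst f r (f a, b') :=
      hF.trans_le (single_le_sum (f := fun b' => pushFst f r (f a, b'))
        (fun _ _ => pushFst_nonneg f hr _) (mem_univ b))
    rw [← mul_add, ← Real.log_mul (by positivity) (by positivity)]
    congr 2
    field_simp
  · rw [add_zero, le_antisymm (not_lt.1 h) (hr _), zero_mul]

theorem condMutInfo_eq_zero [Fintype C] (f : A → C) {r : A × B → ℝ}
    (hmarkov : ∀ a b, r (a, b) * ∑ b', pushFst f r (f a, b')
      = (∑ b', r (a, b')) * pushFst f r (f a, b)) :
    condMutInfo f r = 0 := by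
  refine sum_eq_zero fun ⟨a, b⟩ _ => ?_
  simp only [hmarkov, mul_comm (∑ b', r (a, b')), ite_eq_right_iff]
  intro _
  rcases eq_or_ne (pushFst f r (f a, b) * ∑ b', r (a, b')) 0 with h | h
  · rw [h, div_zero, Real.log_zero, mul_zero]
  · rw [div_self h, Real.log_one, mul_zero]

end MutualInformation

section Statistics

variable {𝒲 : Type*} [Fintype 𝒳] [Fintype 𝒴] [Fintype 𝒲]

theorem pushFst_eq_margSTW (q : 𝒳 × 𝒴 × 𝒲 → ℝ) (s : 𝒳 → 𝒮) (t : 𝒴 → 𝒯)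
    (z : (𝒮 × 𝒯) × 𝒲) :
    pushFst (Prod.map s t) (fun z => q (z.1.1, z.1.2, z.2)) z
      = margSTW q s t z.1.1 z.1.2 z.2 := by
  simp only [pushFst, margSTW, sum_filter, Fintype.sum_prod_type, Prod.ext_iff, ite_and,
    Prod.map_fst, Prod.map_snd]
  exact sum_congr rfl fun x _ => by split_ifs <;> simp

theorem sum_margSTW_eq_margST {p : 𝒳 × 𝒴 → ℝ} {q : 𝒳 × 𝒴 × 𝒲 → ℝ}
    (hmarg : ∀ x y, ∑ w, q (x, y, w) = p (x, y)) (s : 𝒳 → 𝒮) (t : 𝒴 → 𝒯)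
    (s0 : 𝒮) (t0 : 𝒯) :
    ∑ w, margSTW q s t s0 t0 w = margST p s t (s0, t0) := by
  simp only [margSTW, margST, ← hmarg]
  rw [sum_comm]
  exact sum_congr rfl fun x _ => sum_comm

theorem sum_margSTW_T [Fintype 𝒯] (r : 𝒳 × 𝒴 × 𝒲 → ℝ) (s : 𝒳 → 𝒮) (t : 𝒴 → 𝒯)
    (s0 : 𝒮) (w : 𝒲) :
    ∑ t0, margSTW r s t s0 t0 w = ∑ x ∈ univ.filter (fun x => s x = s0), ∑ y, r (x, y, w) := by
  simp only [margSTW]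
  rw [sum_comm]
  exact sum_congr rfl fun x _ => sum_fiberwise univ t _

theorem sum_margSTW_S [Fintype 𝒮] (r : 𝒳 × 𝒴 × 𝒲 → ℝ) (s : 𝒳 → 𝒮) (t : 𝒴 → 𝒯)
    (t0 : 𝒯) (w : 𝒲) :
    ∑ s0, margSTW r s t s0 t0 w = ∑ y ∈ univ.filter (fun y => t y = t0), ∑ x, r (x, y, w) := by
  simp only [margSTW]
  rw [sum_fiberwise univ s (fun x => ∑ y ∈ univ.filter (fun y => t y = t0), r (x, y, w)),
    sum_comm]

theorem sum_margSTW_ST [Fintype 𝒮] [Fintype 𝒯] (r : 𝒳 × 𝒴 × 𝒲 → ℝ) (s : 𝒳 → 𝒮)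
    (t : 𝒴 → 𝒯) (w : 𝒲) :
    ∑ s0, ∑ t0, margSTW r s t s0 t0 w = ∑ x, ∑ y, r (x, y, w) := by
  simp only [sum_margSTW_T]
  exact sum_fiberwise univ s _

theorem margSTW_mul_sum_sum {q : 𝒳 × 𝒴 × 𝒲 → ℝ}
    (hCI : ∀ x y w, q (x, y, w) * (∑ x', ∑ y', q (x', y', w))
      = (∑ y', q (x, y', w)) * (∑ x', q (x', y, w)))
    (s : 𝒳 → 𝒮) (t : 𝒴 → 𝒯) (s0 : 𝒮) (t0 : 𝒯) (w : 𝒲) :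
    margSTW q s t s0 t0 w * ∑ x, ∑ y, q (x, y, w)
      = (∑ x ∈ univ.filter (fun x => s x = s0), ∑ y, q (x, y, w))
        * ∑ y ∈ univ.filter (fun y => t y = t0), ∑ x, q (x, y, w) := by
  rw [sum_mul_sum, margSTW, sum_mul]
  exact sum_congr rfl fun x _ => by rw [sum_mul]; exact sum_congr rfl fun y _ => hCI x y w

end Statistics

section Sufficiency

variable [Fintype 𝒳] [Fintype 𝒴] {p : 𝒳 × 𝒴 → ℝ} {s : 𝒳 → 𝒮} {t : 𝒴 → 𝒯}

theorem SuffS.sum_fiber_mul_margX (hs : SuffS p s) (x : 𝒳) (y : 𝒴) :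
    (∑ x' ∈ univ.filter (fun x' => s x' = s x), p (x', y)) * margX p x
      = margS p s (s x) * p (x, y) := by
  rw [margS, sum_mul, sum_mul]
  refine sum_congr rfl fun x' hx' => ?_
  rw [hs x' x y (mem_filter.1 hx').2, mul_comm]

theorem SuffT.sum_fiber_mul_margY (ht : SuffT p t) (x : 𝒳) (y : 𝒴) :
    (∑ y' ∈ univ.filter (fun y' => t y' = t y), p (x, y')) * margY p y
      = margT p t (t y) * p (x, y) := by
  rw [margT, sum_mul, sum_mul]
  refine sum_congr rfl fun y' hy' => ?_
  rw [ht x y' y (mem_filter.1 hy').2, mul_comm]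

theorem margST_mul_margX_mul_margY (hs : SuffS p s) (ht : SuffT p t) (x : 𝒳) (y : 𝒴) :
    margST p s t (s x, t y) * margX p x * margY p y
      = margS p s (s x) * margT p t (t y) * p (x, y) := by
  calc margST p s t (s x, t y) * margX p x * margY p y
      = (∑ y' ∈ univ.filter (fun y' => t y' = t y),
          (∑ x' ∈ univ.filter (fun x' => s x' = s x), p (x', y')) * margX p x) * margY p y := by
        rw [margST, sum_comm, sum_mul]
    _ = margS p s (s x)
          * ((∑ y' ∈ univ.filter (fun y' => t y' = t y), p (x, y')) * margY p y) := by
        simp only [hs.sum_fiber_mul_margX, ← mul_sum, mul_assoc]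
    _ = margS p s (s x) * margT p t (t y) * p (x, y) := by
        rw [ht.sum_fiber_mul_margY, mul_assoc]

end Sufficiency

section Resample

variable {𝒲 : Type*} [Fintype 𝒳] [Fintype 𝒴] [Fintype 𝒲]

theorem margSTW_nonneg {q : 𝒳 × 𝒴 × 𝒲 → ℝ} (hq0 : ∀ z, 0 ≤ q z) (s : 𝒳 → 𝒮) (t : 𝒴 → 𝒯)
    (s0 : 𝒮) (t0 : 𝒯) (w : 𝒲) : 0 ≤ margSTW q s t s0 t0 w :=
  sum_nonneg fun _ _ => sum_nonneg fun _ _ => hq0 _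

theorem margST_nonneg {p : 𝒳 × 𝒴 → ℝ} (hp0 : ∀ z, 0 ≤ p z) (s : 𝒳 → 𝒮) (t : 𝒴 → 𝒯)
    (z : 𝒮 × 𝒯) : 0 ≤ margST p s t z :=
  sum_nonneg fun _ _ => sum_nonneg fun _ _ => hp0 _

theorem le_margST {p : 𝒳 × 𝒴 → ℝ} (hp0 : ∀ z, 0 ≤ p z) (s : 𝒳 → 𝒮) (t : 𝒴 → 𝒯)
    (x : 𝒳) (y : 𝒴) : p (x, y) ≤ margST p s t (s x, t y) :=
  calc p (x, y) ≤ ∑ y' ∈ univ.filter (fun y' => t y' = t y), p (x, y') :=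
        single_le_sum (f := fun y' => p (x, y')) (fun _ _ => hp0 _) (by simp)
    _ ≤ margST p s t (s x, t y) :=
        single_le_sum (f := fun x' => ∑ y' ∈ univ.filter (fun y' => t y' = t y), p (x', y'))
          (fun _ _ => sum_nonneg fun _ _ => hp0 _) (by simp)

theorem eq_zero_of_margST_eq_zero {p : 𝒳 × 𝒴 → ℝ} (hp0 : ∀ z, 0 ≤ p z) {s : 𝒳 → 𝒮}
    {t : 𝒴 → 𝒯} {x : 𝒳} {y : 𝒴} (hM : margST p s t (s x, t y) = 0) : p (x, y) = 0 :=
  le_antisymm (hM ▸ le_margST hp0 s t x y) (hp0 _)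

theorem margSTW_eq_zero_of_margST_eq_zero {p : 𝒳 × 𝒴 → ℝ} {q : 𝒳 × 𝒴 × 𝒲 → ℝ}
    (hq0 : ∀ z, 0 ≤ q z) (hmarg : ∀ x y, ∑ w, q (x, y, w) = p (x, y)) {s : 𝒳 → 𝒮}
    {t : 𝒴 → 𝒯} {s0 : 𝒮} {t0 : 𝒯} (hM : margST p s t (s0, t0) = 0) (w : 𝒲) :
    margSTW q s t s0 t0 w = 0 := by
  refine le_antisymm ?_ (margSTW_nonneg hq0 s t s0 t0 w)
  rw [← hM, ← sum_margSTW_eq_margST hmarg]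
  exact single_le_sum (fun w _ => margSTW_nonneg hq0 s t s0 t0 w) (mem_univ w)

/-- `q'(x, y, w) = p(x, y) · q(w | s x, t y)`. Where `margST p` vanishes the junk value
`_ / 0 = 0` is harmless, since `p` vanishes there too. -/
def resampleW (p : 𝒳 × 𝒴 → ℝ) (q : 𝒳 × 𝒴 × 𝒲 → ℝ) (s : 𝒳 → 𝒮) (t : 𝒴 → 𝒯)
    (z : 𝒳 × 𝒴 × 𝒲) : ℝ :=
  p (z.1, z.2.1) * margSTW q s t (s z.1) (t z.2.1) z.2.2 / margST p s t (s z.1, t z.2.1)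

variable {p : 𝒳 × 𝒴 → ℝ} {q : 𝒳 × 𝒴 × 𝒲 → ℝ} {s : 𝒳 → 𝒮} {t : 𝒴 → 𝒯}

theorem resampleW_nonneg (hp0 : ∀ z, 0 ≤ p z) (hq0 : ∀ z, 0 ≤ q z) (z : 𝒳 × 𝒴 × 𝒲) :
    0 ≤ resampleW p q s t z :=
  div_nonneg (mul_nonneg (hp0 _) (margSTW_nonneg hq0 _ _ _ _ _)) (margST_nonneg hp0 _ _ _)

theorem resampleW_mul_margST (hp0 : ∀ z, 0 ≤ p z) (x : 𝒳) (y : 𝒴) (w : 𝒲) :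
    resampleW p q s t (x, y, w) * margST p s t (s x, t y)
      = p (x, y) * margSTW q s t (s x) (t y) w := by
  rcases eq_or_ne (margST p s t (s x, t y)) 0 with hM | hM
  · simp [hM, eq_zero_of_margST_eq_zero hp0 hM]
  · exact div_mul_cancel₀ _ hM

theorem sum_resampleW (hp0 : ∀ z, 0 ≤ p z) (hmarg : ∀ x y, ∑ w, q (x, y, w) = p (x, y))
    (x : 𝒳) (y : 𝒴) : ∑ w, resampleW p q s t (x, y, w) = p (x, y) := by
  simp only [resampleW]
  rw [← sum_div, ← mul_sum, sum_margSTW_eq_margST hmarg]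
  rcases eq_or_ne (margST p s t (s x, t y)) 0 with hM | hM
  · rw [hM, div_zero, eq_zero_of_margST_eq_zero hp0 hM]
  · exact mul_div_cancel_right₀ _ hM

theorem margSTW_resampleW (hq0 : ∀ z, 0 ≤ q z) (hmarg : ∀ x y, ∑ w, q (x, y, w) = p (x, y))
    (s0 : 𝒮) (t0 : 𝒯) (w : 𝒲) :
    margSTW (resampleW p q s t) s t s0 t0 w = margSTW q s t s0 t0 w := by
  have hfactor : margSTW (resampleW p q s t) s t s0 t0 w
      = margST p s t (s0, t0) * (margSTW q s t s0 t0 w / margST p s t (s0, t0)) := by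
    calc margSTW (resampleW p q s t) s t s0 t0 w
        = ∑ x ∈ univ.filter (fun x => s x = s0), ∑ y ∈ univ.filter (fun y => t y = t0),
            p (x, y) * (margSTW q s t s0 t0 w / margST p s t (s0, t0)) :=
          sum_congr rfl fun x hx => sum_congr rfl fun y hy => by
            simp only [resampleW, (mem_filter.1 hx).2, (mem_filter.1 hy).2, mul_div_assoc]
      _ = _ := by simp only [margST, sum_mul]
  rcases eq_or_ne (margST p s t (s0, t0)) 0 with hM | hM
  · rw [hfactor, hM, zero_mul, margSTW_eq_zero_of_margST_eq_zero hq0 hmarg hM]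
  · rw [hfactor, mul_div_cancel₀ _ hM]

theorem isPMF_resampleW (hp : IsPMF p) (hq0 : ∀ z, 0 ≤ q z)
    (hmarg : ∀ x y, ∑ w, q (x, y, w) = p (x, y)) : IsPMF (resampleW p q s t) := by
  refine ⟨resampleW_nonneg hp.1 hq0, ?_⟩
  calc ∑ z, resampleW p q s t z = ∑ x, ∑ y, ∑ w, resampleW p q s t (x, y, w) := by
        simp only [Fintype.sum_prod_type]
    _ = ∑ z, p z := by simp only [sum_resampleW hp.1 hmarg, Fintype.sum_prod_type]
    _ = 1 := hp.2

theorem resampleW_markov_chain [Fintype 𝒮] [Fintype 𝒯] (hq0 : ∀ z, 0 ≤ q z)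
    (hmarg : ∀ x y, ∑ w, q (x, y, w) = p (x, y)) (hs : SuffS p s) (ht : SuffT p t)
    (hCI : ∀ x y w, q (x, y, w) * (∑ x', ∑ y', q (x', y', w))
      = (∑ y', q (x, y', w)) * (∑ x', q (x', y, w))) (x : 𝒳) (y : 𝒴) (w : 𝒲) :
    resampleW p q s t (x, y, w) * margS p s (s x) * margT p t (t y)
        * (∑ x', ∑ y', resampleW p q s t (x', y', w))
      = margX p x * margY p y
        * (∑ x' ∈ univ.filter (fun x' => s x' = s x), ∑ y', resampleW p q s t (x', y', w))
        * (∑ y' ∈ univ.filter (fun y' => t y' = t y), ∑ x', resampleW p q s t (x', y', w)) := by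
  rw [← sum_margSTW_ST _ s t, ← sum_margSTW_T _ s t, ← sum_margSTW_S _ s t]
  simp only [margSTW_resampleW hq0 hmarg]
  rw [sum_margSTW_ST q s t, sum_margSTW_T q s t, sum_margSTW_S q s t,
    mul_assoc (margX p x * margY p y), ← margSTW_mul_sum_sum hCI]
  have hA := margST_mul_margX_mul_margY hs ht x y
  rcases eq_or_ne (margST p s t (s x, t y)) 0 with hM | hM
  · simp [resampleW, hM, margSTW_eq_zero_of_margST_eq_zero hq0 hmarg hM]
  · rw [resampleW]
    field_simp
    linear_combination -(margSTW q s t (s x) (t y) w * ∑ x', ∑ y', q (x', y', w)) * hA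

theorem mutInfo_resampleW [Fintype 𝒮] [Fintype 𝒯] (hp0 : ∀ z, 0 ≤ p z)
    (hq0 : ∀ z, 0 ≤ q z) (hmarg : ∀ x y, ∑ w, q (x, y, w) = p (x, y)) :
    mutInfo (fun z : (𝒳 × 𝒴) × 𝒲 => resampleW p q s t (z.1.1, z.1.2, z.2))
      = mutInfo (fun z : (𝒮 × 𝒯) × 𝒲 => margSTW q s t z.1.1 z.1.2 z.2) := by
  have hpush : pushFst (Prod.map s t) (fun z => resampleW p q s t (z.1.1, z.1.2, z.2))
      = fun z => margSTW q s t z.1.1 z.1.2 z.2 :=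
    funext fun z => (pushFst_eq_margSTW _ s t z).trans (margSTW_resampleW hq0 hmarg _ _ _)
  rw [mutInfo_eq_mutInfo_pushFst_add_condMutInfo (Prod.map s t)
    fun _ => resampleW_nonneg hp0 hq0 _, condMutInfo_eq_zero, add_zero, hpush]
  rintro ⟨x, y⟩ w
  simp only [hpush, sum_margSTW_eq_margST hmarg, sum_resampleW hp0 hmarg]
  exact resampleW_mul_margST hp0 x y w

theorem mutInfo_margSTW_eq_sub [Fintype 𝒮] [Fintype 𝒯] (hq0 : ∀ z, 0 ≤ q z)
    (hmarg : ∀ x y, ∑ w, q (x, y, w) = p (x, y)) :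
    mutInfo (fun z : (𝒮 × 𝒯) × 𝒲 => margSTW q s t z.1.1 z.1.2 z.2)
      = mutInfo (fun z : (𝒳 × 𝒴) × 𝒲 => q (z.1.1, z.1.2, z.2))
        - ∑ z : 𝒳 × 𝒴 × 𝒲, (if 0 < q z then
            q z * Real.log (q z * margST p s t (s z.1, t z.2.1)
              / (margSTW q s t (s z.1) (t z.2.1) z.2.2 * p (z.1, z.2.1))) else 0) := by
  have hpush : pushFst (Prod.map s t) (fun z => q (z.1.1, z.1.2, z.2))
      = fun z => margSTW q s t z.1.1 z.1.2 z.2 :=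
    funext (pushFst_eq_margSTW q s t)
  rw [mutInfo_eq_mutInfo_pushFst_add_condMutInfo (Prod.map s t)
    fun _ => hq0 _, condMutInfo, ← (Equiv.prodAssoc _ _ _).sum_comp, hpush]
  simp only [sum_margSTW_eq_margST hmarg, hmarg, Equiv.prodAssoc_apply, Prod.map_fst,
    Prod.map_snd, add_sub_cancel_right]

end Resample

theorem wyner_construction_general
    [Fintype 𝒳] [Fintype 𝒴]
    [Fintype 𝒮] [Fintype 𝒯]
    (p : 𝒳 × 𝒴 → ℝ) (hp : IsPMF p)
    (s : 𝒳 → 𝒮) (t : 𝒴 → 𝒯)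
    (hs : SuffS p s) (ht : SuffT p t)
    {𝒲 : Type*} [Fintype 𝒲]
    (q : 𝒳 × 𝒴 × 𝒲 → ℝ) (hq : IsPMF q)
    (hmarg : ∀ x y, ∑ w, q (x, y, w) = p (x, y))
    (hCI : ∀ x y w, q (x, y, w) * (∑ x', ∑ y', q (x', y', w))
      = (∑ y', q (x, y', w)) * (∑ x', q (x', y, w))) :
    ∃ q' : 𝒳 × 𝒴 × 𝒲 → ℝ,
      IsPMF q' ∧
      (∀ x y, ∑ w, q' (x, y, w) = p (x, y)) ∧
      -- (i) Markov relation (X,Y) - (S,T) - W'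
      (∀ x y w, q' (x, y, w) * margST p s t (s x, t y)
        = p (x, y) * margSTW q' s t (s x) (t y) w) ∧
      -- (ii) (S,T,W') has the same distribution as (S,T,W)
      (∀ s0 t0 w, margSTW q' s t s0 t0 w = margSTW q s t s0 t0 w) ∧
      -- (iii) Markov chain X - S - W' - T - Y
      (∀ x y w,
        q' (x, y, w) * margS p s (s x) * margT p t (t y)
            * (∑ x', ∑ y', q' (x', y', w))
          = margX p x * margY p y
            * (∑ x' ∈ Finset.univ.filter (fun x' => s x' = s x), ∑ y', q' (x', y', w))
            * (∑ y' ∈ Finset.univ.filter (fun y' => t y' = t y), ∑ x', q' (x', y', w))) ∧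
      -- (iv) I_{q'}(W; (X,Y)) = I_q(W; (S,T)) = I_q(W; (X,Y)) - I_q(W; (X,Y) | (S,T))
      mutInfo (fun z : (𝒳 × 𝒴) × 𝒲 => q' (z.1.1, z.1.2, z.2))
        = mutInfo (fun z : (𝒮 × 𝒯) × 𝒲 => margSTW q s t z.1.1 z.1.2 z.2) ∧
      mutInfo (fun z : (𝒮 × 𝒯) × 𝒲 => margSTW q s t z.1.1 z.1.2 z.2)
        = mutInfo (fun z : (𝒳 × 𝒴) × 𝒲 => q (z.1.1, z.1.2, z.2))
          - ∑ z : 𝒳 × 𝒴 × 𝒲, (if 0 < q z then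
              q z * Real.log (q z * margST p s t (s z.1, t z.2.1)
                / (margSTW q s t (s z.1) (t z.2.1) z.2.2 * p (z.1, z.2.1))) else 0) := by
  refine ⟨resampleW p q s t, isPMF_resampleW hp hq.1 hmarg, sum_resampleW hp.1 hmarg,
    fun x y w => ?_, margSTW_resampleW hq.1 hmarg, resampleW_markov_chain hq.1 hmarg hs ht hCI,
    mutInfo_resampleW hp.1 hq.1 hmarg, mutInfo_margSTW_eq_sub hq.1 hmarg⟩
  rw [margSTW_resampleW hq.1 hmarg]
  exact resampleW_mul_margST hp.1 x y w

/-- Construction of the auxiliary variable `W'` for Wyner's common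
information (Lemma 5 of the paper). -/
theorem wyner_construction
    [Fintype 𝒳] [Nonempty 𝒳] [Fintype 𝒴] [Nonempty 𝒴]
    [Fintype 𝒮] [Nonempty 𝒮] [Fintype 𝒯] [Nonempty 𝒯]
    (p : 𝒳 × 𝒴 → ℝ) (hp : IsPMF p)
    (hX : ∀ x, 0 < margX p x) (hY : ∀ y, 0 < margY p y)
    (s : 𝒳 → 𝒮) (t : 𝒴 → 𝒯)
    (hs : SuffS p s) (ht : SuffT p t)
    {𝒲 : Type*} [Fintype 𝒲] [Nonempty 𝒲]
    (q : 𝒳 × 𝒴 × 𝒲 → ℝ) (hq : IsPMF q)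
    (hmarg : ∀ x y, ∑ w, q (x, y, w) = p (x, y))
    (hCI : ∀ x y w, q (x, y, w) * (∑ x', ∑ y', q (x', y', w))
      = (∑ y', q (x, y', w)) * (∑ x', q (x', y, w))) :
    ∃ q' : 𝒳 × 𝒴 × 𝒲 → ℝ,
      IsPMF q' ∧
      (∀ x y, ∑ w, q' (x, y, w) = p (x, y)) ∧
      -- (i) Markov relation (X,Y) - (S,T) - W'
      (∀ x y w, q' (x, y, w) * margST p s t (s x, t y)
        = p (x, y) * margSTW q' s t (s x) (t y) w) ∧
      -- (ii) (S,T,W') has the same distribution as (S,T,W)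
      (∀ s0 t0 w, margSTW q' s t s0 t0 w = margSTW q s t s0 t0 w) ∧
      -- (iii) Markov chain X - S - W' - T - Y
      (∀ x y w,
        q' (x, y, w) * margS p s (s x) * margT p t (t y)
            * (∑ x', ∑ y', q' (x', y', w))
          = margX p x * margY p y
            * (∑ x' ∈ Finset.univ.filter (fun x' => s x' = s x), ∑ y', q' (x', y', w))
            * (∑ y' ∈ Finset.univ.filter (fun y' => t y' = t y), ∑ x', q' (x', y', w))) ∧
      -- (iv) I_{q'}(W; (X,Y)) = I_q(W; (S,T)) = I_q(W; (X,Y)) - I_q(W; (X,Y) | (S,T))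
      mutInfo (fun z : (𝒳 × 𝒴) × 𝒲 => q' (z.1.1, z.1.2, z.2))
        = mutInfo (fun z : (𝒮 × 𝒯) × 𝒲 => margSTW q s t z.1.1 z.1.2 z.2) ∧
      mutInfo (fun z : (𝒮 × 𝒯) × 𝒲 => margSTW q s t z.1.1 z.1.2 z.2)
        = mutInfo (fun z : (𝒳 × 𝒴) × 𝒲 => q (z.1.1, z.1.2, z.2))
          - ∑ z : 𝒳 × 𝒴 × 𝒲, (if 0 < q z then
              q z * Real.log (q z * margST p s t (s z.1, t z.2.1)
                / (margSTW q s t (s z.1) (t z.2.1) z.2.2 * p (z.1, z.2.1))) else 0) :=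
  wyner_construction_general p hp s t hs ht q hq hmarg hCI

end
end
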